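/- Let E ⊂ ℝ^n be nonempty and compact, θ ∈ (0,1] and 1 ≤ m₁ ≤ m₂ ≤ n. Then \underline{dim}_θ^{m₁} E ≤ \underline{dim}_θ^{m₂} E and \overline{dim}_θ^{m₁} E ≤ \overline{dim}_θ^{m₂} E. -/

import Mathlib

open MeasureTheory Metric Set Filter Topology
open scoped ENNReal NNReal

noncomputable section

/-- Euclidean space `ℝ^n`. -/
abbrev Euc (n : ℕ) := EuclideanSpace ℝ (Fin n)

instance matrixMeasurableSpace (n : ℕ) : MeasurableSpace (Matrix (Fin n) (Fin n) ℝ) :=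
  inferInstanceAs (MeasurableSpace (Fin n → Fin n → ℝ))

/-- The restricted covering sum `S_{r,θ}^s(E)`: the infimum of `Σ_i |U_i|^s` over all
countable covers `{U_i}` of `E` with `r ≤ |U_i| ≤ r^θ`, valued in `ℝ≥0∞`. -/
def coverSum (n : ℕ) (E : Set (Euc n)) (θ s r : ℝ) : ℝ≥0∞ :=
  sInf { T : ℝ≥0∞ | ∃ 𝒰 : Set (Set (Euc n)), 𝒰.Countable ∧ E ⊆ ⋃₀ 𝒰 ∧
    (∀ U ∈ 𝒰, r ≤ diam U ∧ diam U ≤ r ^ θ) ∧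
    T = ∑' U : 𝒰, ENNReal.ofReal (diam (U : Set (Euc n)) ^ s) }

/-- Real-valued version of `coverSum`. -/
def Sval (n : ℕ) (E : Set (Euc n)) (θ s r : ℝ) : ℝ := (coverSum n E θ s r).toReal

/-- The quotient `log S_{r,θ}^s(E) / (-log r)`. -/
def Squot (n : ℕ) (E : Set (Euc n)) (θ s r : ℝ) : ℝ :=
  Real.log (Sval n E θ s r) / (-Real.log r)

/-- `N_δ(E)`: the smallest number of sets of diameter at most `δ` needed to cover `E`. -/
def covNum (n : ℕ) (E : Set (Euc n)) (δ : ℝ) : ℕ :=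
  sInf { k : ℕ | ∃ U : Fin k → Set (Euc n), E ⊆ ⋃ i, U i ∧ ∀ i, diam (U i) ≤ δ }

/-- The lower box-counting dimension of `E`. -/
def lowerBoxDim (n : ℕ) (E : Set (Euc n)) : ℝ :=
  liminf (fun δ : ℝ => Real.log (covNum n E δ) / (-Real.log δ)) (𝓝[>] 0)

/-- The upper box-counting dimension of `E`. -/
def upperBoxDim (n : ℕ) (E : Set (Euc n)) : ℝ :=
  limsup (fun δ : ℝ => Real.log (covNum n E δ) / (-Real.log δ)) (𝓝[>] 0)

/-- The kernel `φ_{r,θ}^{s,m}`. -/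
def phiK (n : ℕ) (m s θ r : ℝ) (x : Euc n) : ℝ :=
  if ‖x‖ < r then 1
  else if ‖x‖ < r ^ θ then (r / ‖x‖) ^ s
  else r ^ (θ * (m - s) + s) / ‖x‖ ^ m

/-- The kernel `φ̃_{r,θ}^s`. -/
def phiT (n : ℕ) (s θ r : ℝ) (x : Euc n) : ℝ :=
  if ‖x‖ < r then 1
  else if ‖x‖ ≤ r ^ θ then (r / ‖x‖) ^ s
  else 0

/-- The kernel `φ_r^m(x) = min{1, (r/|x|)^m}`. -/
def phiB (n : ℕ) (m r : ℝ) (x : Euc n) : ℝ :=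
  if ‖x‖ ≤ r then 1 else (r / ‖x‖) ^ m

/-- The energy `∬ φ(x-y) dμ(x)dμ(y)` of a measure with respect to a kernel `φ`. -/
def energy (n : ℕ) (φ : Euc n → ℝ) (μ : Measure (Euc n)) : ℝ :=
  ∫ x, ∫ y, φ (x - y) ∂μ ∂μ

/-- The potential `∫ φ(x-y) dμ(y)` of a measure at `x` with respect to a kernel `φ`. -/
def potential (n : ℕ) (φ : Euc n → ℝ) (μ : Measure (Euc n)) (x : Euc n) : ℝ :=
  ∫ y, φ (x - y) ∂μ

/-- `μ` is a Borel probability measure supported on `E`. -/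
def PMeasOn (n : ℕ) (E : Set (Euc n)) (μ : Measure (Euc n)) : Prop :=
  IsProbabilityMeasure μ ∧ μ Eᶜ = 0

/-- The capacity `C_{r,θ}^{s,m}(E)`: the reciprocal of the infimal energy of Borel
probability measures supported on `E` with respect to the kernel `φ_{r,θ}^{s,m}`. -/
def capacity (n : ℕ) (m s θ r : ℝ) (E : Set (Euc n)) : ℝ :=
  (sInf { e : ℝ | ∃ μ : Measure (Euc n), PMeasOn n E μ ∧ e = energy n (phiK n m s θ r) μ })⁻¹

/-- The quotient `log C_{r,θ}^{s,m}(E) / (-log r)`. -/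
def Cquot (n : ℕ) (m s θ : ℝ) (E : Set (Euc n)) (r : ℝ) : ℝ :=
  Real.log (capacity n m s θ r E) / (-Real.log r)

/-- `d` is the lower intermediate dimension `\underline{dim}_θ E`, i.e. the unique
`s ∈ [0,n]` such that `liminf_{r→0} log S_{r,θ}^s(E) / (-log r) = 0`. -/
def IsLowerInterDim (n : ℕ) (θ : ℝ) (E : Set (Euc n)) (d : ℝ) : Prop :=
  d ∈ Icc (0:ℝ) n ∧ liminf (fun r => Squot n E θ d r) (𝓝[>] 0) = 0

/-- `d` is the upper intermediate dimension `\overline{dim}_θ E`. -/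
def IsUpperInterDim (n : ℕ) (θ : ℝ) (E : Set (Euc n)) (d : ℝ) : Prop :=
  d ∈ Icc (0:ℝ) n ∧ limsup (fun r => Squot n E θ d r) (𝓝[>] 0) = 0

/-- `d` is the lower intermediate dimension profile `\underline{dim}_θ^m E`, i.e. the unique
`s ∈ [0,m]` such that `liminf_{r→0} log C_{r,θ}^{s,m}(E) / (-log r) = s`; for bounded sets the
capacity is that of the closure. -/
def IsLowerDimProfile (n m : ℕ) (θ : ℝ) (E : Set (Euc n)) (d : ℝ) : Prop :=
  d ∈ Icc (0:ℝ) m ∧ liminf (fun r => Cquot n m d θ (closure E) r) (𝓝[>] 0) = d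

/-- `d` is the upper intermediate dimension profile `\overline{dim}_θ^m E`. -/
def IsUpperDimProfile (n m : ℕ) (θ : ℝ) (E : Set (Euc n)) (d : ℝ) : Prop :=
  d ∈ Icc (0:ℝ) m ∧ limsup (fun r => Cquot n m d θ (closure E) r) (𝓝[>] 0) = d

/-- `P` is the matrix of an orthogonal projection of `ℝ^n` onto an `m`-dimensional subspace;
such matrices parametrise the Grassmannian `G(n,m)`. -/
def IsProjMat (n m : ℕ) (P : Matrix (Fin n) (Fin n) ℝ) : Prop :=
  P.transpose = P ∧ P * P = P ∧ P.rank = m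

/-- The orthogonal projection map `π_V` associated to a projection matrix. -/
def projMap (n : ℕ) (P : Matrix (Fin n) (Fin n) ℝ) : Euc n → Euc n :=
  fun x => Matrix.toEuclideanLin P x

/-- `γ` is the natural invariant measure `γ_{n,m}` on the Grassmannian `G(n,m)` (realised as
the space of orthogonal projection matrices of rank `m`): a probability measure supported on
the rank-`m` orthogonal projections and invariant under the action of the orthogonal group. -/
def IsGrassMeasure (n m : ℕ) (γ : Measure (Matrix (Fin n) (Fin n) ℝ)) : Prop :=
  IsProbabilityMeasure γ ∧ γ {P | IsProjMat n m P}ᶜ = 0 ∧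
  ∀ A ∈ Matrix.orthogonalGroup (Fin n) ℝ,
    Measure.map (fun P => A * P * A.transpose) γ = γ

/-!
The kernel `φ_{r,θ}^{s,m}` decreases in `m`, so the capacity increases in `m`. For `s ≤ t` the
kernels compare as `φ^s ≤ r^{-(1-θ)(t-s)} φ^t`, so `log C^t / (-log r)` exceeds
`log C^s / (-log r)` by at most `(1-θ)(t-s)`. If the profiles for `m₁ ≤ m₂` were `d₁ > d₂`,
these two facts would give `d₁ ≤ d₂ + (1-θ)(d₁-d₂)`, that is `θ (d₁ - d₂) ≤ 0`, which is absurd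
for `θ > 0`. For small `r` the quotients lie in `[0, m + m log D]`, where `D ≥ 1` bounds the
distances in `E`; this is what makes the `liminf`/`limsup` manipulations legitimate.
-/

section Filter

variable {α : Type*} {l : Filter α} [l.NeBot] {f g : α → ℝ} {c : ℝ}

lemma liminf_le_liminf_add_of_eventually_le (h : ∀ᶠ x in l, f x ≤ g x + c)
    (hf : IsBoundedUnder (· ≥ ·) l f) (hg : IsBoundedUnder (· ≤ ·) l g)
    (hg' : IsBoundedUnder (· ≥ ·) l g) : liminf f l ≤ liminf g l + c := by
  rw [← liminf_add_const l g c hg.isCoboundedUnder_ge hg']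
  exact liminf_le_liminf h hf (isBoundedUnder_le_add hg isBoundedUnder_const).isCoboundedUnder_ge

lemma limsup_le_limsup_add_of_eventually_le (h : ∀ᶠ x in l, f x ≤ g x + c)
    (hf : IsBoundedUnder (· ≥ ·) l f) (hg : IsBoundedUnder (· ≤ ·) l g)
    (hg' : IsBoundedUnder (· ≥ ·) l g) : limsup f l ≤ limsup g l + c := by
  rw [← limsup_add_const l g c hg hg'.isCoboundedUnder_le]
  exact limsup_le_limsup h hf.isCoboundedUnder_le (isBoundedUnder_le_add hg isBoundedUnder_const)

end Filter

lemma eventually_log_le_neg_one : ∀ᶠ r in 𝓝[>] (0 : ℝ), 0 < r ∧ r < 1 ∧ Real.log r ≤ -1 := by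
  filter_upwards [Ioc_mem_nhdsGT (Real.exp_pos (-1))] with r hr
  have hlogr : Real.log r ≤ -1 := (Real.log_le_iff_le_exp hr.1).2 hr.2
  exact ⟨hr.1, (Real.log_neg_iff hr.1).1 (by linarith), hlogr⟩

section

variable {n : ℕ}

lemma phiK_nonneg {m s θ r : ℝ} (hr : 0 ≤ r) (x : Euc n) : 0 ≤ phiK n m s θ r x := by
  unfold phiK
  split_ifs
  · exact zero_le_one
  · positivity
  · positivity

lemma phiK_le_one {m s θ r : ℝ} (hr : 0 < r) (hr1 : r ≤ 1) (hθ1 : θ ≤ 1) (hs : 0 ≤ s)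
    (hsm : s ≤ m) (x : Euc n) : phiK n m s θ r x ≤ 1 := by
  unfold phiK
  split_ifs with h₁ h₂
  · exact le_rfl
  · exact Real.rpow_le_one (by positivity) (div_le_one_of_le₀ (not_lt.1 h₁) (norm_nonneg x)) hs
  · have hx : r ^ θ ≤ ‖x‖ := not_lt.1 h₂
    have hrθ : 0 < r ^ θ := Real.rpow_pos_of_pos hr θ
    rw [div_le_one (Real.rpow_pos_of_pos (hrθ.trans_le hx) m)]
    calc r ^ (θ * (m - s) + s) ≤ r ^ (θ * m) :=
          Real.rpow_le_rpow_of_exponent_ge hr hr1 (by nlinarith)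
      _ = (r ^ θ) ^ m := Real.rpow_mul hr.le θ m
      _ ≤ ‖x‖ ^ m := Real.rpow_le_rpow hrθ.le hx (hs.trans hsm)

lemma phiK_antitone_left {m₁ m₂ s θ r : ℝ} (hr : 0 < r) (hm : m₁ ≤ m₂) (x : Euc n) :
    phiK n m₂ s θ r x ≤ phiK n m₁ s θ r x := by
  unfold phiK
  split_ifs with h₁ h₂
  · exact le_rfl
  · exact le_rfl
  · have hx : r ^ θ ≤ ‖x‖ := not_lt.1 h₂
    have hrθ : 0 < r ^ θ := Real.rpow_pos_of_pos hr θ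
    have hfactor : ∀ m : ℝ, r ^ (θ * (m - s) + s) / ‖x‖ ^ m
        = r ^ (s * (1 - θ)) * (r ^ θ / ‖x‖) ^ m := fun m => by
      rw [Real.div_rpow hrθ.le (norm_nonneg x), ← Real.rpow_mul hr.le, ← mul_div_assoc,
        ← Real.rpow_add hr]
      ring_nf
    rw [hfactor m₁, hfactor m₂]
    exact mul_le_mul_of_nonneg_left (Real.rpow_le_rpow_of_exponent_ge
      (div_pos hrθ (hrθ.trans_le hx)) (div_le_one_of_le₀ hx (norm_nonneg x)) hm) (by positivity)

lemma phiK_le_rpow_mul {m s t θ r : ℝ} (hr : 0 < r) (hr1 : r ≤ 1) (hθ1 : θ ≤ 1) (hst : s ≤ t)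
    (x : Euc n) : phiK n m s θ r x ≤ r ^ ((θ - 1) * (t - s)) * phiK n m t θ r x := by
  unfold phiK
  split_ifs with h₁ h₂
  · simpa using Real.one_le_rpow_of_pos_of_le_one_of_nonpos hr hr1 (by nlinarith)
  · have hxr : r ≤ ‖x‖ := not_lt.1 h₁
    have hx : 0 < ‖x‖ := hr.trans_le hxr
    calc (r / ‖x‖) ^ s = (‖x‖ / r) ^ (t - s) * (r / ‖x‖) ^ t := by
          rw [← inv_div r, Real.inv_rpow (by positivity), ← Real.rpow_neg (by positivity),
            ← Real.rpow_add (by positivity)]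
          ring_nf
      _ ≤ (r ^ θ / r) ^ (t - s) * (r / ‖x‖) ^ t := by gcongr
      _ = r ^ ((θ - 1) * (t - s)) * (r / ‖x‖) ^ t := by
          rw [← Real.rpow_sub_one hr.ne', ← Real.rpow_mul hr.le]
  · rw [← mul_div_assoc, ← Real.rpow_add hr]
    exact le_of_eq (by ring_nf)

lemma div_rpow_le_phiK {m s θ r D : ℝ} (hr : 0 < r) (hr1 : r ≤ 1) (hθ1 : θ ≤ 1) (hs : 0 ≤ s)
    (hsm : s ≤ m) (hD : 1 ≤ D) {x : Euc n} (hx : ‖x‖ ≤ D) :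
    (r / D) ^ m ≤ phiK n m s θ r x := by
  have hm : 0 ≤ m := hs.trans hsm
  unfold phiK
  split_ifs with h₁ h₂
  · exact Real.rpow_le_one (by positivity) (div_le_one_of_le₀ (hr1.trans hD) (by linarith)) hm
  · have hx0 : 0 < ‖x‖ := hr.trans_le (not_lt.1 h₁)
    have hb : r / ‖x‖ ≤ 1 := div_le_one_of_le₀ (not_lt.1 h₁) hx0.le
    calc (r / D) ^ m ≤ (r / ‖x‖) ^ m := by gcongr
      _ ≤ (r / ‖x‖) ^ s := Real.rpow_le_rpow_of_exponent_ge (by positivity) hb hsm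
  · have hx0 : 0 < ‖x‖ := (Real.rpow_pos_of_pos hr θ).trans_le (not_lt.1 h₂)
    calc (r / D) ^ m ≤ r ^ m / ‖x‖ ^ m := by
          rw [Real.div_rpow hr.le (by linarith)]
          gcongr
      _ ≤ r ^ (θ * (m - s) + s) / ‖x‖ ^ m := div_le_div_of_nonneg_right
          (Real.rpow_le_rpow_of_exponent_ge hr hr1 (by nlinarith)) (by positivity)

lemma measurable_phiK (n : ℕ) (m s θ r : ℝ) : Measurable (phiK n m s θ r) := by
  unfold phiK
  refine Measurable.ite (measurableSet_lt measurable_norm measurable_const) measurable_const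
    (Measurable.ite (measurableSet_lt measurable_norm measurable_const) ?_ ?_) <;> fun_prop

lemma integrable_kernel_prod {φ : Euc n → ℝ} (hφ : Measurable φ) {B : ℝ}
    (hB : ∀ z, |φ z| ≤ B) (μ : Measure (Euc n)) [IsFiniteMeasure μ] :
    Integrable (fun p : Euc n × Euc n => φ (p.1 - p.2)) (μ.prod μ) :=
  .of_bound (hφ.comp (measurable_fst.sub measurable_snd)).aestronglyMeasurable B
    (.of_forall fun _ => hB _)

lemma energy_eq_integral_prod {φ : Euc n → ℝ} {μ : Measure (Euc n)} [SFinite μ]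
    (hφ : Integrable (fun p : Euc n × Euc n => φ (p.1 - p.2)) (μ.prod μ)) :
    energy n φ μ = ∫ p, φ (p.1 - p.2) ∂μ.prod μ :=
  (integral_prod _ hφ).symm

lemma energy_mono {φ ψ : Euc n → ℝ} {μ : Measure (Euc n)} [SFinite μ]
    (hφ : Integrable (fun p : Euc n × Euc n => φ (p.1 - p.2)) (μ.prod μ))
    (hψ : Integrable (fun p : Euc n × Euc n => ψ (p.1 - p.2)) (μ.prod μ))
    (hφψ : ∀ z, φ z ≤ ψ z) : energy n φ μ ≤ energy n ψ μ := by
  rw [energy_eq_integral_prod hφ, energy_eq_integral_prod hψ]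
  exact integral_mono hφ hψ fun _ => hφψ _

lemma le_energy {φ : Euc n → ℝ} {E : Set (Euc n)} {μ : Measure (Euc n)} (hμ : PMeasOn n E μ)
    (hφ : Integrable (fun p : Euc n × Euc n => φ (p.1 - p.2)) (μ.prod μ)) {c : ℝ}
    (hc : ∀ x ∈ E, ∀ y ∈ E, c ≤ φ (x - y)) : c ≤ energy n φ μ := by
  obtain ⟨_, hμE⟩ := hμ
  have hE : ∀ᵐ x ∂μ, x ∈ E := ae_iff.2 hμE
  have hEE : ∀ᵐ p ∂μ.prod μ, p.1 ∈ E ∧ p.2 ∈ E :=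
    (Measure.quasiMeasurePreserving_fst.ae hE).and (Measure.quasiMeasurePreserving_snd.ae hE)
  rw [energy_eq_integral_prod hφ]
  simpa using integral_mono_ae (integrable_const c) hφ (hEE.mono fun p hp => hc _ hp.1 _ hp.2)

lemma energy_dirac (φ : Euc n → ℝ) (x : Euc n) : energy n φ (Measure.dirac x) = φ 0 := by
  simp only [energy, integral_dirac, sub_self]

lemma energy_const_mul (φ : Euc n → ℝ) (κ : ℝ) (μ : Measure (Euc n)) :
    energy n (fun z => κ * φ z) μ = κ * energy n φ μ := by
  simp only [energy, integral_const_mul]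

lemma energy_nonneg {φ : Euc n → ℝ} (hφ0 : ∀ z, 0 ≤ φ z) (μ : Measure (Euc n)) :
    0 ≤ energy n φ μ :=
  integral_nonneg fun _ => integral_nonneg fun _ => hφ0 _

lemma pMeasOn_dirac {E : Set (Euc n)} (hE : MeasurableSet E) {x : Euc n} (hx : x ∈ E) :
    PMeasOn n E (Measure.dirac x) :=
  ⟨inferInstance, by simp [Measure.dirac_apply' _ hE.compl, hx]⟩

def minEnergy (n : ℕ) (φ : Euc n → ℝ) (E : Set (Euc n)) : ℝ :=
  sInf {e : ℝ | ∃ μ : Measure (Euc n), PMeasOn n E μ ∧ e = energy n φ μ}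

lemma capacity_eq_inv_minEnergy (m s θ r : ℝ) (E : Set (Euc n)) :
    capacity n m s θ r E = (minEnergy n (phiK n m s θ r) E)⁻¹ :=
  rfl

section minEnergy

variable {φ ψ : Euc n → ℝ} {E : Set (Euc n)}

lemma minEnergy_nonneg (hφ0 : ∀ z, 0 ≤ φ z) : 0 ≤ minEnergy n φ E :=
  Real.sInf_nonneg (by rintro _ ⟨μ, -, rfl⟩; exact energy_nonneg hφ0 μ)

lemma minEnergy_le_energy (hφ0 : ∀ z, 0 ≤ φ z) {μ : Measure (Euc n)} (hμ : PMeasOn n E μ) :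
    minEnergy n φ E ≤ energy n φ μ :=
  csInf_le ⟨0, by rintro _ ⟨ν, -, rfl⟩; exact energy_nonneg hφ0 ν⟩ ⟨μ, hμ, rfl⟩

lemma minEnergy_le_apply_zero (hφ0 : ∀ z, 0 ≤ φ z) (hE : MeasurableSet E) (hEne : E.Nonempty) :
    minEnergy n φ E ≤ φ 0 := by
  obtain ⟨x, hx⟩ := hEne
  simpa [energy_dirac] using minEnergy_le_energy hφ0 (pMeasOn_dirac hE hx)

lemma le_minEnergy (hE : MeasurableSet E) (hEne : E.Nonempty) (hφ : Measurable φ) {B : ℝ}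
    (hB : ∀ z, |φ z| ≤ B) {c : ℝ} (hc : ∀ x ∈ E, ∀ y ∈ E, c ≤ φ (x - y)) :
    c ≤ minEnergy n φ E := by
  obtain ⟨x, hx⟩ := hEne
  refine le_csInf ⟨_, _, pMeasOn_dirac hE hx, rfl⟩ ?_
  rintro _ ⟨μ, hμ, rfl⟩
  have := hμ.1
  exact le_energy hμ (integrable_kernel_prod hφ hB μ) hc

lemma minEnergy_mono (hE : MeasurableSet E) (hEne : E.Nonempty) (hφ : Measurable φ)
    (hψ : Measurable ψ) (hφ0 : ∀ z, 0 ≤ φ z) (hφψ : ∀ z, φ z ≤ ψ z) {B : ℝ}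
    (hψB : ∀ z, ψ z ≤ B) : minEnergy n φ E ≤ minEnergy n ψ E := by
  obtain ⟨x, hx⟩ := hEne
  refine le_csInf ⟨_, _, pMeasOn_dirac hE hx, rfl⟩ ?_
  rintro _ ⟨μ, hμ, rfl⟩
  have := hμ.1
  have hψ0 z : 0 ≤ ψ z := (hφ0 z).trans (hφψ z)
  have hφB z : |φ z| ≤ B := (abs_of_nonneg (hφ0 z)).trans_le ((hφψ z).trans (hψB z))
  have hψB' z : |ψ z| ≤ B := (abs_of_nonneg (hψ0 z)).trans_le (hψB z)
  exact (minEnergy_le_energy hφ0 hμ).trans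
    (energy_mono (integrable_kernel_prod hφ hφB μ) (integrable_kernel_prod hψ hψB' μ) hφψ)

open scoped Pointwise in
lemma minEnergy_const_mul {κ : ℝ} (hκ : 0 ≤ κ) :
    minEnergy n (fun z => κ * φ z) E = κ * minEnergy n φ E := by
  have hset : {e : ℝ | ∃ μ : Measure (Euc n), PMeasOn n E μ ∧ e = energy n (fun z => κ * φ z) μ}
      = κ • {e : ℝ | ∃ μ : Measure (Euc n), PMeasOn n E μ ∧ e = energy n φ μ} := by
    ext e
    simp [Set.mem_smul_set, energy_const_mul, eq_comm]
  rw [minEnergy, minEnergy, hset, Real.sInf_smul_of_nonneg hκ, smul_eq_mul]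

end minEnergy

section phiK

variable {m s θ r : ℝ} {E : Set (Euc n)}

lemma abs_phiK_le_one (hr : 0 < r) (hr1 : r ≤ 1) (hθ1 : θ ≤ 1) (hs : 0 ≤ s) (hsm : s ≤ m)
    (x : Euc n) : |phiK n m s θ r x| ≤ 1 :=
  (abs_of_nonneg (phiK_nonneg hr.le x)).trans_le (phiK_le_one hr hr1 hθ1 hs hsm x)

lemma minEnergy_phiK_le_one (hE : MeasurableSet E) (hEne : E.Nonempty) (hr : 0 < r) :
    minEnergy n (phiK n m s θ r) E ≤ 1 := by
  simpa [phiK, hr] using minEnergy_le_apply_zero (phiK_nonneg hr.le) hE hEne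

lemma div_rpow_le_minEnergy_phiK (hE : MeasurableSet E) (hEne : E.Nonempty) (hr : 0 < r)
    (hr1 : r ≤ 1) (hθ1 : θ ≤ 1) (hs : 0 ≤ s) (hsm : s ≤ m) {D : ℝ} (hD : 1 ≤ D)
    (hDE : ∀ x ∈ E, ∀ y ∈ E, ‖x - y‖ ≤ D) : (r / D) ^ m ≤ minEnergy n (phiK n m s θ r) E :=
  le_minEnergy hE hEne (measurable_phiK n m s θ r) (abs_phiK_le_one hr hr1 hθ1 hs hsm)
    fun x hx y hy => div_rpow_le_phiK hr hr1 hθ1 hs hsm hD (hDE x hx y hy)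

lemma IsCompact.exists_norm_sub_le (hE : IsCompact E) :
    ∃ D, 1 ≤ D ∧ ∀ x ∈ E, ∀ y ∈ E, ‖x - y‖ ≤ D := by
  obtain ⟨C, hC⟩ := Metric.isBounded_iff.1 hE.isBounded
  exact ⟨max 1 C, le_max_left _ _, fun x hx y hy => (dist_eq_norm x y ▸ hC hx hy).trans
    (le_max_right _ _)⟩

lemma minEnergy_phiK_pos (hE : IsCompact E) (hEne : E.Nonempty) (hr : 0 < r) (hr1 : r ≤ 1)
    (hθ1 : θ ≤ 1) (hs : 0 ≤ s) (hsm : s ≤ m) : 0 < minEnergy n (phiK n m s θ r) E := by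
  obtain ⟨D, hD, hDE⟩ := hE.exists_norm_sub_le
  exact (by positivity : 0 < (r / D) ^ m).trans_le
    (div_rpow_le_minEnergy_phiK hE.isClosed.measurableSet hEne hr hr1 hθ1 hs hsm hD hDE)

lemma minEnergy_phiK_antitone_left (hE : MeasurableSet E) (hEne : E.Nonempty) (hr : 0 < r)
    (hr1 : r ≤ 1) (hθ1 : θ ≤ 1) (hs : 0 ≤ s) (hsm : s ≤ m) {m' : ℝ} (hm : m ≤ m') :
    minEnergy n (phiK n m' s θ r) E ≤ minEnergy n (phiK n m s θ r) E :=
  minEnergy_mono hE hEne (measurable_phiK n m' s θ r) (measurable_phiK n m s θ r)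
    (phiK_nonneg hr.le) (phiK_antitone_left hr hm) (phiK_le_one hr hr1 hθ1 hs hsm)

lemma minEnergy_phiK_le_rpow_mul (hE : MeasurableSet E) (hEne : E.Nonempty) (hr : 0 < r)
    (hr1 : r ≤ 1) (hθ1 : θ ≤ 1) {t : ℝ} (hst : s ≤ t) (ht : 0 ≤ t) (htm : t ≤ m) :
    minEnergy n (phiK n m s θ r) E
      ≤ r ^ ((θ - 1) * (t - s)) * minEnergy n (phiK n m t θ r) E := by
  rw [← minEnergy_const_mul (by positivity)]
  exact minEnergy_mono hE hEne (measurable_phiK n m s θ r)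
    ((measurable_phiK n m t θ r).const_mul _)
    (phiK_nonneg hr.le) (phiK_le_rpow_mul hr hr1 hθ1 hst)
    fun x => mul_le_of_le_one_right (by positivity) (phiK_le_one hr hr1 hθ1 ht htm x)

lemma Cquot_eq (m s θ : ℝ) (E : Set (Euc n)) (r : ℝ) :
    Cquot n m s θ E r = Real.log (minEnergy n (phiK n m s θ r) E) / Real.log r := by
  rw [Cquot, capacity_eq_inv_minEnergy, Real.log_inv, neg_div_neg_eq]

lemma Cquot_nonneg (hE : MeasurableSet E) (hEne : E.Nonempty) (hr : 0 < r) (hr1 : r < 1) :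
    0 ≤ Cquot n m s θ E r := by
  rw [Cquot_eq]
  exact div_nonneg_of_nonpos (Real.log_nonpos (minEnergy_nonneg (phiK_nonneg hr.le))
    (minEnergy_phiK_le_one hE hEne hr)) (Real.log_neg hr hr1).le

lemma Cquot_le (hE : MeasurableSet E) (hEne : E.Nonempty) (hr : 0 < r) (hlogr : Real.log r ≤ -1)
    (hθ1 : θ ≤ 1) (hs : 0 ≤ s) (hsm : s ≤ m) {D : ℝ} (hD : 1 ≤ D)
    (hDE : ∀ x ∈ E, ∀ y ∈ E, ‖x - y‖ ≤ D) : Cquot n m s θ E r ≤ m + m * Real.log D := by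
  have hr1 : r ≤ 1 := (Real.log_nonpos_iff hr.le).1 (by linarith)
  have hlow := Real.log_le_log (by positivity)
    (div_rpow_le_minEnergy_phiK hE hEne hr hr1 hθ1 hs hsm hD hDE)
  rw [Real.log_rpow (by positivity), Real.log_div hr.ne' (by positivity)] at hlow
  rw [Cquot_eq, div_le_iff_of_neg (by linarith)]
  nlinarith [mul_nonneg (hs.trans hsm) (Real.log_nonneg hD)]

lemma Cquot_le_Cquot_of_le_left (hE : IsCompact E) (hEne : E.Nonempty) (hr : 0 < r)
    (hr1 : r < 1) (hθ1 : θ ≤ 1) (hs : 0 ≤ s) (hsm : s ≤ m) {m' : ℝ} (hm : m ≤ m') :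
    Cquot n m s θ E r ≤ Cquot n m' s θ E r := by
  rw [Cquot_eq, Cquot_eq]
  exact div_le_div_of_nonpos_of_le (Real.log_neg hr hr1).le <| Real.log_le_log
    (minEnergy_phiK_pos hE hEne hr hr1.le hθ1 hs (hsm.trans hm))
    (minEnergy_phiK_antitone_left hE.isClosed.measurableSet hEne hr hr1.le hθ1 hs hsm hm)

lemma Cquot_le_Cquot_add (hE : IsCompact E) (hEne : E.Nonempty) (hr : 0 < r) (hr1 : r < 1)
    (hθ1 : θ ≤ 1) (hs : 0 ≤ s) {t : ℝ} (hst : s ≤ t) (htm : t ≤ m) :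
    Cquot n m t θ E r ≤ Cquot n m s θ E r + (1 - θ) * (t - s) := by
  have hlogr : Real.log r < 0 := Real.log_neg hr hr1
  have hlog := Real.log_le_log (minEnergy_phiK_pos hE hEne hr hr1.le hθ1 hs (hst.trans htm))
    (minEnergy_phiK_le_rpow_mul hE.isClosed.measurableSet hEne hr hr1.le hθ1 hst
      (hs.trans hst) htm)
  rw [Real.log_mul (by positivity) (minEnergy_phiK_pos hE hEne hr hr1.le hθ1 (hs.trans hst)
    htm).ne', Real.log_rpow hr] at hlog
  rw [Cquot_eq, Cquot_eq, div_le_iff_of_neg hlogr, add_mul, div_mul_cancel₀ _ hlogr.ne]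
  linarith

end phiK

section Cquot

variable {m s θ : ℝ} {E : Set (Euc n)}

lemma isBoundedUnder_ge_Cquot (hE : MeasurableSet E) (hEne : E.Nonempty) :
    IsBoundedUnder (· ≥ ·) (𝓝[>] 0) (Cquot n m s θ E) :=
  isBoundedUnder_of_eventually_ge <| eventually_log_le_neg_one.mono fun _ hr =>
    Cquot_nonneg hE hEne hr.1 hr.2.1

lemma isBoundedUnder_le_Cquot (hE : IsCompact E) (hEne : E.Nonempty) (hθ1 : θ ≤ 1) (hs : 0 ≤ s)
    (hsm : s ≤ m) : IsBoundedUnder (· ≤ ·) (𝓝[>] 0) (Cquot n m s θ E) := by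
  obtain ⟨D, hD, hDE⟩ := hE.exists_norm_sub_le
  exact isBoundedUnder_of_eventually_le <| eventually_log_le_neg_one.mono fun _ hr =>
    Cquot_le hE.isClosed.measurableSet hEne hr.1 hr.2.2 hθ1 hs hsm hD hDE

lemma eventually_Cquot_le_Cquot_add (hE : IsCompact E) (hEne : E.Nonempty) (hθ1 : θ ≤ 1)
    {d₁ d₂ m₁ m₂ : ℝ} (hd₂ : 0 ≤ d₂) (hd : d₂ ≤ d₁) (hd₁ : d₁ ≤ m₁) (hm : m₁ ≤ m₂) :
    ∀ᶠ r in 𝓝[>] 0, Cquot n m₁ d₁ θ E r ≤ Cquot n m₂ d₂ θ E r + (1 - θ) * (d₁ - d₂) := by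
  filter_upwards [eventually_log_le_neg_one] with r ⟨hr, hr1, _⟩
  exact (Cquot_le_Cquot_of_le_left hE hEne hr hr1 hθ1 (hd₂.trans hd) hd₁ hm).trans
    (Cquot_le_Cquot_add hE hEne hr hr1 hθ1 hd₂ hd (hd₁.trans hm))

end Cquot

end

theorem statement6_general (n m₁ m₂ : ℕ) (h12 : m₁ ≤ m₂)
    (E : Set (Euc n)) (hE : IsCompact E) (hEne : E.Nonempty)
    (θ : ℝ) (hθ : θ ∈ Ioc (0:ℝ) 1) :
    (∀ d₁ d₂ : ℝ, IsLowerDimProfile n m₁ θ E d₁ → IsLowerDimProfile n m₂ θ E d₂ → d₁ ≤ d₂) ∧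
    (∀ d₁ d₂ : ℝ, IsUpperDimProfile n m₁ θ E d₁ → IsUpperDimProfile n m₂ θ E d₂ → d₁ ≤ d₂) := by
  obtain ⟨hθ0, hθ1⟩ := hθ
  have hm : (m₁ : ℝ) ≤ m₂ := Nat.cast_le.2 h12
  have hEm := hE.isClosed.measurableSet
  simp only [IsLowerDimProfile, IsUpperDimProfile, hE.isClosed.closure_eq]
  refine ⟨fun d₁ d₂ ⟨⟨_, hd₁m⟩, h₁⟩ ⟨⟨hd₂, hd₂m⟩, h₂⟩ => ?_,
    fun d₁ d₂ ⟨⟨_, hd₁m⟩, h₁⟩ ⟨⟨hd₂, hd₂m⟩, h₂⟩ => ?_⟩ <;> by_contra! hlt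
  · have := liminf_le_liminf_add_of_eventually_le
      (eventually_Cquot_le_Cquot_add hE hEne hθ1 hd₂ hlt.le hd₁m hm)
      (isBoundedUnder_ge_Cquot hEm hEne) (isBoundedUnder_le_Cquot hE hEne hθ1 hd₂ hd₂m)
      (isBoundedUnder_ge_Cquot hEm hEne)
    rw [h₁, h₂] at this
    nlinarith
  · have := limsup_le_limsup_add_of_eventually_le
      (eventually_Cquot_le_Cquot_add hE hEne hθ1 hd₂ hlt.le hd₁m hm)
      (isBoundedUnder_ge_Cquot hEm hEne) (isBoundedUnder_le_Cquot hE hEne hθ1 hd₂ hd₂m)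
      (isBoundedUnder_ge_Cquot hEm hEne)
    rw [h₁, h₂] at this
    nlinarith

/-- The intermediate dimension profiles are increasing in `m`. -/
theorem statement6 (n m₁ m₂ : ℕ) (hm1 : 1 ≤ m₁) (h12 : m₁ ≤ m₂) (h2n : m₂ ≤ n)
    (E : Set (Euc n)) (hE : IsCompact E) (hEne : E.Nonempty)
    (θ : ℝ) (hθ : θ ∈ Ioc (0:ℝ) 1) :
    (∀ d₁ d₂ : ℝ, IsLowerDimProfile n m₁ θ E d₁ → IsLowerDimProfile n m₂ θ E d₂ → d₁ ≤ d₂) ∧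
    (∀ d₁ d₂ : ℝ, IsUpperDimProfile n m₁ θ E d₁ → IsUpperDimProfile n m₂ θ E d₂ → d₁ ≤ d₂) :=
  statement6_general n m₁ m₂ h12 E hE hEne θ hθ
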